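/- There exists a post-Lie algebra structure on the pair (g, n), where g = sl_2(ℂ) ⊕ ℂ³ (the direct Lie algebra sum of sl_2(ℂ) and the 3-dimensional abelian Lie algebra) and n = ℂ⁴ ⊕ r_2(ℂ) (the direct Lie algebra sum of the 4-dimensional abelian Lie algebra and the 2-dimensional non-abelian Lie algebra), both regarded as Lie brackets on the same 7-dimensional complex vector space. In particular, there is a pair (g, n) with g reductive non-semisimple and n solvable non-nilpotent admitting a post-Lie algebra structure. -/

import Mathlib

noncomputable section

/-- A map `V → V → V` is ℂ-bilinear. -/
def IsBilin {V : Type*} [AddCommGroup V] [Module ℂ V] (f : V → V → V) : Prop :=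
  (∀ (a : ℂ) (x y z : V), f (a • x + y) z = a • f x z + f y z) ∧
  (∀ (a : ℂ) (x y z : V), f x (a • y + z) = a • f x y + f x z)

/-- `f` is a Lie bracket on the complex vector space `V`. -/
def IsLieBracket {V : Type*} [AddCommGroup V] [Module ℂ V] (f : V → V → V) : Prop :=
  IsBilin f ∧ (∀ x, f x x = 0) ∧
  ∀ x y z, f x (f y z) + f y (f z x) + f z (f x y) = 0

/-- `p` is a post-Lie algebra structure on the pair of Lie brackets `(g, n)` on `V`. -/
def IsPostLieStruct {V : Type*} [AddCommGroup V] [Module ℂ V]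
    (g n p : V → V → V) : Prop :=
  IsBilin p ∧
  (∀ x y, p x y - p y x = g x y - n x y) ∧
  (∀ x y z, p (g x y) z = p x (p y z) - p y (p x z)) ∧
  (∀ x y z, p x (n y z) = n (p x y) z + n y (p x z))

/-- The bracket of `g = sl₂(ℂ) ⊕ ℂ³` on `ℂ⁶`: coordinates `0, 1, 2` carry `sl₂(ℂ)`
in the standard basis `(e, f, h) = (E₁₂, E₂₁, E₁₁ - E₂₂)` with `[e,f] = h`,
`[h,e] = 2e`, `[h,f] = -2f`, and coordinates `3, 4, 5` carry the `3`-dimensional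
abelian Lie algebra. -/
def sl2C3Bracket (x y : Fin 6 → ℂ) : Fin 6 → ℂ :=
  ![2 * (x 2 * y 0 - y 2 * x 0), -2 * (x 2 * y 1 - y 2 * x 1),
    x 0 * y 1 - y 0 * x 1, 0, 0, 0]

/-- The bracket of `n = ℂ⁴ ⊕ r₂(ℂ)` on `ℂ⁶`: coordinates `0, 1, 2, 3` carry the
`4`-dimensional abelian Lie algebra, and coordinates `4, 5` carry the `2`-dimensional
non-abelian Lie algebra `r₂(ℂ)` with basis `(a, b)` and bracket `{a, b} = b`. -/
def c4R2Bracket (x y : Fin 6 → ℂ) : Fin 6 → ℂ :=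
  ![0, 0, 0, 0, 0, x 4 * y 5 - y 4 * x 5]

/-!
Send `e₃` to the identity matrix: coordinates `0, …, 3` become `gl₂(ℂ) = sl₂(ℂ) ⊕ ℂ·1`, and the
pair splits as `(gl₂(ℂ), ℂ⁴) × (ℂ², r₂(ℂ))`. On the first factor matrix multiplication
`x·y = xy` is a post-Lie product: (1) is the commutator, (2) is associativity, and (3) is
vacuous because `n` is abelian there. On the second factor `a·b = -b`, all other products of basis
vectors being zero, works: `g` is abelian there and `L_a = -ad a` is a derivation of `r₂(ℂ)`.
-/

section

variable {V W : Type*} [AddCommGroup V] [Module ℂ V] [AddCommGroup W] [Module ℂ W]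

theorem IsBilin.of_injective {φ : V →ₗ[ℂ] W} (hφ : Function.Injective φ) {f : V → V → V}
    {F : W → W → W} (hF : IsBilin F) (hf : ∀ x y, φ (f x y) = F (φ x) (φ y)) : IsBilin f := by
  constructor <;> intro a x y z <;> apply hφ <;> simp [hf, hF.1, hF.2]

theorem IsLieBracket.of_injective {φ : V →ₗ[ℂ] W} (hφ : Function.Injective φ)
    {f : V → V → V} {F : W → W → W} (hF : IsLieBracket F)
    (hf : ∀ x y, φ (f x y) = F (φ x) (φ y)) : IsLieBracket f :=
  ⟨hF.1.of_injective hφ hf, fun x => hφ (by simp [hf, hF.2.1]),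
    fun x y z => hφ (by simp [hf, hF.2.2])⟩

theorem IsPostLieStruct.of_injective {φ : V →ₗ[ℂ] W} (hφ : Function.Injective φ)
    {g n p : V → V → V} {G N P : W → W → W} (h : IsPostLieStruct G N P)
    (hg : ∀ x y, φ (g x y) = G (φ x) (φ y)) (hn : ∀ x y, φ (n x y) = N (φ x) (φ y))
    (hp : ∀ x y, φ (p x y) = P (φ x) (φ y)) : IsPostLieStruct g n p :=
  ⟨h.1.of_injective hφ hp, fun x y => hφ (by simp [hg, hn, hp, h.2.1]),
    fun x y z => hφ (by simp [hg, hp, h.2.2.1]), fun x y z => hφ (by simp [hn, hp, h.2.2.2])⟩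

theorem IsBilin.prod {f₁ : V → V → V} {f₂ : W → W → W} (h₁ : IsBilin f₁) (h₂ : IsBilin f₂) :
    IsBilin fun x y : V × W => (f₁ x.1 y.1, f₂ x.2 y.2) := by
  constructor <;> intro a x y z <;> simp [h₁.1, h₁.2, h₂.1, h₂.2]

theorem IsLieBracket.prod {f₁ : V → V → V} {f₂ : W → W → W} (h₁ : IsLieBracket f₁)
    (h₂ : IsLieBracket f₂) : IsLieBracket fun x y : V × W => (f₁ x.1 y.1, f₂ x.2 y.2) :=
  ⟨h₁.1.prod h₂.1, fun x => by simp [h₁.2.1, h₂.2.1], fun x y z => by simp [h₁.2.2, h₂.2.2]⟩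

theorem IsPostLieStruct.prod {g₁ n₁ p₁ : V → V → V} {g₂ n₂ p₂ : W → W → W}
    (h₁ : IsPostLieStruct g₁ n₁ p₁) (h₂ : IsPostLieStruct g₂ n₂ p₂) :
    IsPostLieStruct (fun x y : V × W => (g₁ x.1 y.1, g₂ x.2 y.2))
      (fun x y => (n₁ x.1 y.1, n₂ x.2 y.2)) (fun x y => (p₁ x.1 y.1, p₂ x.2 y.2)) :=
  ⟨h₁.1.prod h₂.1, fun x y => by simp [h₁.2.1, h₂.2.1],
    fun x y z => by simp [h₁.2.2.1, h₂.2.2.1], fun x y z => by simp [h₁.2.2.2, h₂.2.2.2]⟩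

theorem isLieBracket_zero : IsLieBracket fun _ _ : V => (0 : V) :=
  ⟨⟨fun _ _ _ _ => by simp, fun _ _ _ _ => by simp⟩, fun _ => rfl, fun _ _ _ => by simp⟩

end

section

variable (A : Type*) [Ring A] [Algebra ℂ A]

theorem isLieBracket_commutator : IsLieBracket fun x y : A => x * y - y * x := by
  refine ⟨⟨fun a x y z => ?_, fun a x y z => ?_⟩, fun x => sub_self _, fun x y z => by noncomm_ring⟩
  all_goals simp only [add_mul, mul_add, smul_mul_assoc, mul_smul_comm, smul_sub]; abel

theorem isPostLieStruct_mul :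
    IsPostLieStruct (fun x y : A => x * y - y * x) (fun _ _ => 0) (· * ·) :=
  ⟨⟨fun a x y z => by simp [add_mul], fun a x y z => by simp [mul_add]⟩,
    fun x y => (sub_zero _).symm, fun x y z => by simp [sub_mul, mul_assoc], fun x y z => by simp⟩

end

def r2Bracket (x y : Fin 2 → ℂ) : Fin 2 → ℂ := ![0, x 0 * y 1 - y 0 * x 1]

def r2PostLieProduct (x y : Fin 2 → ℂ) : Fin 2 → ℂ := ![0, -(x 0 * y 1)]

theorem isLieBracket_r2Bracket : IsLieBracket r2Bracket := by
  refine ⟨⟨?_, ?_⟩, ?_, ?_⟩ <;> intros <;> ext i <;> fin_cases i <;> simp [r2Bracket] <;> ring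

theorem isPostLieStruct_zero_r2Bracket :
    IsPostLieStruct (fun _ _ => 0) r2Bracket r2PostLieProduct := by
  refine ⟨⟨?_, ?_⟩, ?_, ?_, ?_⟩ <;> intros <;> ext i <;> fin_cases i <;>
    simp [r2Bracket, r2PostLieProduct] <;> ring

def gl2Embedding : (Fin 6 → ℂ) →ₗ[ℂ] Matrix (Fin 2) (Fin 2) ℂ × (Fin 2 → ℂ) where
  toFun x := (!![x 2 + x 3, x 0; x 1, x 3 - x 2], ![x 4, x 5])
  map_add' x y := by
    ext i j <;> fin_cases i <;> try fin_cases j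
    all_goals simp <;> ring
  map_smul' a x := by
    ext i j <;> fin_cases i <;> try fin_cases j
    all_goals simp <;> ring

theorem gl2Embedding_injective : Function.Injective gl2Embedding := by
  intro x y h
  simp only [gl2Embedding, LinearMap.coe_mk, AddHom.coe_mk, Prod.mk.injEq, ← Matrix.ext_iff,
    funext_iff, Fin.forall_fin_two] at h
  simp only [Matrix.of_apply, Matrix.cons_val', Matrix.cons_val_zero, Matrix.cons_val_one,
    Matrix.cons_val_fin_one] at h
  obtain ⟨⟨⟨h00, h01⟩, h10, h11⟩, h4, h5⟩ := h
  have h2 : x 2 = y 2 := by linear_combination (h00 - h11) / 2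
  have h3 : x 3 = y 3 := by linear_combination (h00 + h11) / 2
  ext i; fin_cases i
  exacts [h01, h10, h2, h3, h4, h5]

theorem gl2Embedding_sl2C3Bracket (x y : Fin 6 → ℂ) :
    gl2Embedding (sl2C3Bracket x y) =
      ((gl2Embedding x).1 * (gl2Embedding y).1 - (gl2Embedding y).1 * (gl2Embedding x).1, 0) := by
  ext i j <;> fin_cases i <;> try fin_cases j
  all_goals simp [gl2Embedding, sl2C3Bracket] <;> ring

theorem gl2Embedding_c4R2Bracket (x y : Fin 6 → ℂ) :
    gl2Embedding (c4R2Bracket x y) = (0, r2Bracket (gl2Embedding x).2 (gl2Embedding y).2) := by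
  ext i j <;> fin_cases i <;> try fin_cases j
  all_goals simp [gl2Embedding, c4R2Bracket, r2Bracket]

def postLieProduct (x y : Fin 6 → ℂ) : Fin 6 → ℂ :=
  ![x 2 * y 0 - x 0 * y 2 + x 0 * y 3 + x 3 * y 0,
    -(x 2 * y 1) + x 1 * y 2 + x 1 * y 3 + x 3 * y 1,
    (x 0 * y 1 - x 1 * y 0) / 2 + x 2 * y 3 + x 3 * y 2,
    (x 0 * y 1 + x 1 * y 0) / 2 + x 2 * y 2 + x 3 * y 3,
    0, -(x 4 * y 5)]

theorem gl2Embedding_postLieProduct (x y : Fin 6 → ℂ) :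
    gl2Embedding (postLieProduct x y) =
      ((gl2Embedding x).1 * (gl2Embedding y).1,
        r2PostLieProduct (gl2Embedding x).2 (gl2Embedding y).2) := by
  ext i j <;> fin_cases i <;> try fin_cases j
  all_goals simp [gl2Embedding, postLieProduct, r2PostLieProduct, Matrix.mul_apply] <;> ring

/-- There exists a post-Lie algebra structure on the pair `(g, n)`
with `g = sl₂(ℂ) ⊕ ℂ³` and `n = ℂ⁴ ⊕ r₂(ℂ)`, both regarded as Lie brackets on the
same (`6`-dimensional) complex vector space; in particular `g` is reductive
non-semisimple and `n` is solvable non-nilpotent. -/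
theorem postLie_exists_on_sl2c3_c4r2 :
    IsLieBracket sl2C3Bracket ∧ IsLieBracket c4R2Bracket ∧
    ∃ p : (Fin 6 → ℂ) → (Fin 6 → ℂ) → (Fin 6 → ℂ),
      IsPostLieStruct sl2C3Bracket c4R2Bracket p :=
  ⟨((isLieBracket_commutator _).prod isLieBracket_zero).of_injective gl2Embedding_injective
      gl2Embedding_sl2C3Bracket,
    (isLieBracket_zero.prod isLieBracket_r2Bracket).of_injective gl2Embedding_injective
      gl2Embedding_c4R2Bracket,
    postLieProduct,
    ((isPostLieStruct_mul _).prod isPostLieStruct_zero_r2Bracket).of_injective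
      gl2Embedding_injective gl2Embedding_sl2C3Bracket gl2Embedding_c4R2Bracket
      gl2Embedding_postLieProduct⟩
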